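/- arXiv:1801.03362 — 2 statements merged into one kernel-verified Lean document; each statement's English description precedes it below -/
import Mathlib

section
/- Let C : D(C) ⊆ H → Y be closed and densely defined, B : Y → X bounded, and suppose C*B* is densely defined. Then the block operator on H ⊕ X given by [[0, −C*B*],[cl(BC), 0]] with domain D(cl(BC)) ⊕ D(C*B*) is skew-selfadjoint. -/
/-- The composition `B ∘ C` of a bounded operator `B` with a partially defined
(unbounded) operator `C`, as a `LinearPMap` with domain `D(C)`. -/
noncomputable def clmCompPMap {𝕜 H Y X : Type*} [RCLike 𝕜]
    [NormedAddCommGroup H] [InnerProductSpace 𝕜 H]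
    [NormedAddCommGroup Y] [InnerProductSpace 𝕜 Y]
    [NormedAddCommGroup X] [InnerProductSpace 𝕜 X]
    (B : Y →L[𝕜] X) (C : H →ₗ.[𝕜] Y) : H →ₗ.[𝕜] X :=
  { domain := C.domain, toFun := (B : Y →ₗ[𝕜] X).comp C.toFun }

/-- The composition `C' ∘ B'` of a partially defined operator `C'` with a bounded
operator `B'`, as a `LinearPMap` with domain `{x | B' x ∈ D(C')}`. -/
noncomputable def pmapCompClm {𝕜 H Y X : Type*} [RCLike 𝕜]
    [NormedAddCommGroup H] [InnerProductSpace 𝕜 H]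
    [NormedAddCommGroup Y] [InnerProductSpace 𝕜 Y]
    [NormedAddCommGroup X] [InnerProductSpace 𝕜 X]
    (C' : Y →ₗ.[𝕜] H) (B' : X →L[𝕜] Y) : X →ₗ.[𝕜] H :=
  { domain := C'.domain.comap (B' : X →ₗ[𝕜] Y),
    toFun := C'.toFun.comp (((B' : X →ₗ[𝕜] Y)).restrict (fun _ hx => hx)) }

/-- The block operator `[[0, -C'], [C, 0]]` acting on the Hilbert space direct sum
`H₀ ⊕ H₁` (realized as `WithLp 2 (H₀ × H₁)`), with domain `D(C) ⊕ D(C')`,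
`(u, v) ↦ (-C' v, C u)`. -/
noncomputable def blkL2 {𝕜 H₀ H₁ : Type*} [RCLike 𝕜]
    [NormedAddCommGroup H₀] [InnerProductSpace 𝕜 H₀]
    [NormedAddCommGroup H₁] [InnerProductSpace 𝕜 H₁]
    (C : H₀ →ₗ.[𝕜] H₁) (C' : H₁ →ₗ.[𝕜] H₀) :
    WithLp 2 (H₀ × H₁) →ₗ.[𝕜] WithLp 2 (H₀ × H₁) :=
  { domain := (C.domain.prod C'.domain).comap (WithLp.linearEquiv 2 𝕜 (H₀ × H₁)).toLinearMap,
    toFun :=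
    { toFun := fun x => (WithLp.equiv 2 (H₀ × H₁)).symm
        (-(C' ⟨(WithLp.equiv 2 (H₀ × H₁) x.1).2, x.2.2⟩),
          C ⟨(WithLp.equiv 2 (H₀ × H₁) x.1).1, x.2.1⟩)
      map_add' := by
        intro x y
        have e1 : (⟨(WithLp.equiv 2 (H₀ × H₁) (x + y).1).2, (x + y).2.2⟩ : C'.domain)
            = ⟨(WithLp.equiv 2 (H₀ × H₁) x.1).2, x.2.2⟩
              + ⟨(WithLp.equiv 2 (H₀ × H₁) y.1).2, y.2.2⟩ := rfl
        have e2 : (⟨(WithLp.equiv 2 (H₀ × H₁) (x + y).1).1, (x + y).2.1⟩ : C.domain)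
            = ⟨(WithLp.equiv 2 (H₀ × H₁) x.1).1, x.2.1⟩
              + ⟨(WithLp.equiv 2 (H₀ × H₁) y.1).1, y.2.1⟩ := rfl
        beta_reduce
        rw [e1, e2, C'.map_add, C.map_add, WithLp.equiv_symm_apply, ← WithLp.toLp_add, Prod.mk_add_mk, neg_add]
      map_smul' := by
        intro c x
        have e1 : (⟨(WithLp.equiv 2 (H₀ × H₁) (c • x).1).2, (c • x).2.2⟩ : C'.domain)
            = c • ⟨(WithLp.equiv 2 (H₀ × H₁) x.1).2, x.2.2⟩ := rfl
        have e2 : (⟨(WithLp.equiv 2 (H₀ × H₁) (c • x).1).1, (c • x).2.1⟩ : C.domain)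
            = c • ⟨(WithLp.equiv 2 (H₀ × H₁) x.1).1, x.2.1⟩ := rfl
        beta_reduce
        rw [e1, e2, C'.map_smul, C.map_smul, WithLp.equiv_symm_apply, ← WithLp.toLp_smul, Prod.smul_mk, smul_neg]
        rfl } }

/-! With `T = B ∘ C`, boundedness of `B` gives `T* = C*B*` exactly. In `WithLp 2 (E × F)` the
graph of an adjoint is the orthogonal complement of the graph rotated by `(a, b) ↦ (b, -a)`, so
`graph T** = (graph T)ᗮᗮ` is the closure of `graph T` once `T*` is densely defined: `cl T = T**`,
and `(cl T)* = T*`. Thus `S = cl(BC)` and `R = C*B*` are densely defined adjoints of each other,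
and the adjoint of `[[0, -R], [S, 0]]` is `-[[0, -S*], [R*, 0]] = -[[0, -R], [S, 0]]`. -/

open scoped InnerProductSpace

section Adjoint

variable {𝕜 E F : Type*} [RCLike 𝕜]
  [NormedAddCommGroup E] [InnerProductSpace 𝕜 E]
  [NormedAddCommGroup F] [InnerProductSpace 𝕜 F]

namespace Submodule

theorem adjoint_topologicalClosure (g : Submodule 𝕜 (E × F)) :
    g.topologicalClosure.adjoint = g.adjoint := by
  ext x
  simp only [mem_adjoint_iff]
  refine ⟨fun h a b hab => h a b (g.le_topologicalClosure hab), fun h a b hab => ?_⟩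
  have hclosed : IsClosed {p : E × F | ⟪p.2, x.1⟫_𝕜 - ⟪p.1, x.2⟫_𝕜 = 0} :=
    isClosed_eq (by fun_prop) continuous_const
  exact closure_minimal (fun p hp => h p.1 p.2 hp) hclosed hab

theorem adjoint_adjoint [CompleteSpace E] [CompleteSpace F] (g : Submodule 𝕜 (E × F)) :
    g.adjoint.adjoint = g.topologicalClosure := by
  set K : Submodule 𝕜 (WithLp 2 (E × F)) :=
    g.comap (WithLp.linearEquiv 2 𝕜 (E × F)).toLinearMap
  have mem_orthogonal_K (q : WithLp 2 (E × F)) : q ∈ Kᗮ ↔ (q.snd, -q.fst) ∈ g.adjoint := by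
    simp only [mem_orthogonal, mem_adjoint_iff, inner_neg_right, sub_neg_eq_add]
    constructor
    · intro h a b hab
      simpa [WithLp.prod_inner_apply, add_comm] using h (WithLp.toLp 2 (a, b)) hab
    · intro h u hu
      simpa [WithLp.prod_inner_apply, add_comm] using h u.fst u.snd hu
  have mem_closure_K (x : E × F) :
      x ∈ g.topologicalClosure ↔ WithLp.toLp 2 x ∈ K.topologicalClosure :=
    Set.ext_iff.1 ((WithLp.homeomorphProd 2 E F).preimage_closure g) (WithLp.toLp 2 x)
  ext x
  rw [mem_closure_K, ← K.orthogonal_orthogonal_eq_closure, mem_orthogonal, mem_adjoint_iff]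
  constructor
  · intro h q hq
    have := h _ _ ((mem_orthogonal_K q).1 hq)
    rw [inner_neg_left] at this
    rw [WithLp.prod_inner_apply, WithLp.ofLp_fst, WithLp.ofLp_snd]
    linear_combination -this
  · intro h c d hcd
    have := h (WithLp.toLp 2 (-d, c)) ((mem_orthogonal_K _).2 (by simpa using hcd))
    rw [WithLp.prod_inner_apply] at this
    simp only [inner_neg_left] at this
    linear_combination -this

end Submodule

namespace LinearPMap

theorem mem_graph_neg_iff {R E F : Type*} [Ring R] [AddCommGroup E] [Module R E]
    [AddCommGroup F] [Module R F] (f : E →ₗ.[R] F) {x : E} {y : F} :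
    (x, y) ∈ (-f).graph ↔ (x, -y) ∈ f.graph := by
  simp [neg_eq_iff_eq_neg]

theorem mem_adjoint_graph_iff [CompleteSpace E] {T : E →ₗ.[𝕜] F} (hT : Dense (T.domain : Set E))
    {p : F × E} : p ∈ T†.graph ↔ ∀ u : T.domain, ⟪T u, p.1⟫_𝕜 = ⟪(u : E), p.2⟫_𝕜 := by
  rw [adjoint_graph_eq_graph_adjoint hT, Submodule.mem_adjoint_iff]
  simp [sub_eq_zero]

theorem dense_closure_domain {T : E →ₗ.[𝕜] F} (hT : Dense (T.domain : Set E)) :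
    Dense (T.closure.domain : Set E) :=
  hT.mono T.le_closure.1

theorem adjoint_closure [CompleteSpace E] {T : E →ₗ.[𝕜] F} (hT : Dense (T.domain : Set E)) :
    T.closure† = T† := by
  by_cases hT_closable : T.IsClosable
  · apply eq_of_eq_graph
    rw [adjoint_graph_eq_graph_adjoint (dense_closure_domain hT), adjoint_graph_eq_graph_adjoint hT,
      ← hT_closable.graph_closure_eq_closure_graph, Submodule.adjoint_topologicalClosure]
  · rw [closure_def' hT_closable]

theorem graph_adjoint_adjoint [CompleteSpace E] [CompleteSpace F] {T : E →ₗ.[𝕜] F}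
    (hT : Dense (T.domain : Set E)) (hT' : Dense (T†.domain : Set F)) :
    T††.graph = T.graph.topologicalClosure := by
  rw [adjoint_graph_eq_graph_adjoint hT', adjoint_graph_eq_graph_adjoint hT,
    Submodule.adjoint_adjoint]

theorem closure_eq_adjoint_adjoint [CompleteSpace E] [CompleteSpace F] {T : E →ₗ.[𝕜] F}
    (hT : Dense (T.domain : Set E)) (hT' : Dense (T†.domain : Set F)) :
    T.closure = T†† := by
  have hT_closable : T.IsClosable := ⟨T††, (graph_adjoint_adjoint hT hT').symm⟩
  apply eq_of_eq_graph
  rw [← hT_closable.graph_closure_eq_closure_graph, graph_adjoint_adjoint hT hT']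

end LinearPMap

end Adjoint

open LinearPMap

section Composition

variable {𝕜 H Y X : Type*} [RCLike 𝕜]
  [NormedAddCommGroup H] [InnerProductSpace 𝕜 H]
  [NormedAddCommGroup Y] [InnerProductSpace 𝕜 Y]
  [NormedAddCommGroup X] [InnerProductSpace 𝕜 X]

theorem mem_graph_pmapCompClm (C' : Y →ₗ.[𝕜] H) (B' : X →L[𝕜] Y) {x : X} {h : H} :
    (x, h) ∈ (pmapCompClm C' B').graph ↔ (B' x, h) ∈ C'.graph := by
  simp only [mem_graph_iff]
  constructor
  · rintro ⟨x, rfl, rfl⟩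
    exact ⟨⟨B' x, x.2⟩, rfl, rfl⟩
  · rintro ⟨y, hy, rfl⟩
    have hx : B' x ∈ C'.domain := hy ▸ y.2
    exact ⟨⟨x, hx⟩, rfl, congrArg C' (Subtype.ext hy.symm)⟩

theorem adjoint_clmCompPMap [CompleteSpace H] [CompleteSpace Y] [CompleteSpace X]
    {C : H →ₗ.[𝕜] Y} (hC : Dense (C.domain : Set H)) (B : Y →L[𝕜] X) :
    (clmCompPMap B C)† = pmapCompClm C† (ContinuousLinearMap.adjoint B) := by
  apply eq_of_eq_graph
  ext ⟨x, h⟩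
  rw [mem_graph_pmapCompClm, mem_adjoint_graph_iff (T := clmCompPMap B C) hC,
    mem_adjoint_graph_iff hC]
  simp only [ContinuousLinearMap.adjoint_inner_right]
  rfl

end Composition

section Block

variable {𝕜 E F : Type*} [RCLike 𝕜]
  [NormedAddCommGroup E] [InnerProductSpace 𝕜 E]
  [NormedAddCommGroup F] [InnerProductSpace 𝕜 F]

theorem dense_blkL2_domain {S : E →ₗ.[𝕜] F} {T : F →ₗ.[𝕜] E}
    (hS : Dense (S.domain : Set E)) (hT : Dense (T.domain : Set F)) :
    Dense ((blkL2 S T).domain : Set (WithLp 2 (E × F))) :=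
  (hS.prod hT).preimage (WithLp.homeomorphProd 2 E F).isOpenMap

theorem toLp_mem_blkL2_domain {S : E →ₗ.[𝕜] F} {T : F →ₗ.[𝕜] E} {u : E} {v : F}
    (hu : u ∈ S.domain) (hv : v ∈ T.domain) : WithLp.toLp 2 (u, v) ∈ (blkL2 S T).domain :=
  ⟨hu, hv⟩

theorem blkL2_apply_toLp (S : E →ₗ.[𝕜] F) (T : F →ₗ.[𝕜] E) (u : S.domain) (v : T.domain) :
    blkL2 S T ⟨_, toLp_mem_blkL2_domain u.2 v.2⟩ = WithLp.toLp 2 (-T v, S u) :=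
  rfl

theorem mem_graph_blkL2 (S : E →ₗ.[𝕜] F) (T : F →ₗ.[𝕜] E) {w z : WithLp 2 (E × F)} :
    (w, z) ∈ (blkL2 S T).graph ↔ (w.fst, z.snd) ∈ S.graph ∧ (w.snd, -z.fst) ∈ T.graph := by
  simp only [mem_graph_iff]
  constructor
  · rintro ⟨p, rfl, rfl⟩
    exact ⟨⟨⟨_, p.2.1⟩, rfl, rfl⟩, ⟨_, p.2.2⟩, rfl, (neg_neg _).symm⟩
  · rintro ⟨⟨u, hu, hSu⟩, ⟨v, hv, hTv⟩⟩
    obtain ⟨⟨a, b⟩⟩ := w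
    obtain rfl : (u : E) = a := hu
    obtain rfl : (v : F) = b := hv
    refine ⟨⟨_, toLp_mem_blkL2_domain u.2 v.2⟩, rfl, ?_⟩
    rw [blkL2_apply_toLp, hSu, hTv, neg_neg]
    rfl

theorem adjoint_blkL2 [CompleteSpace E] [CompleteSpace F] {S : E →ₗ.[𝕜] F} {T : F →ₗ.[𝕜] E}
    (hS : Dense (S.domain : Set E)) (hT : Dense (T.domain : Set F)) :
    (blkL2 S T)† = -blkL2 T† S† := by
  apply eq_of_eq_graph
  ext ⟨w, z⟩
  rw [mem_graph_neg_iff, mem_graph_blkL2, mem_adjoint_graph_iff hS, mem_adjoint_graph_iff hT,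
    mem_adjoint_graph_iff (dense_blkL2_domain hS hT)]
  simp only [WithLp.neg_fst, WithLp.neg_snd, neg_neg]
  constructor
  · intro h
    constructor
    · intro v
      have := h ⟨_, toLp_mem_blkL2_domain (0 : S.domain).2 v.2⟩
      rw [blkL2_apply_toLp, LinearPMap.map_zero] at this
      simpa [WithLp.prod_inner_apply, neg_eq_iff_eq_neg] using this
    · intro u
      have := h ⟨_, toLp_mem_blkL2_domain u.2 (0 : T.domain).2⟩
      rw [blkL2_apply_toLp, LinearPMap.map_zero] at this
      simpa [WithLp.prod_inner_apply] using this
  · rintro ⟨hw_fst, hw_snd⟩ p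
    let u : S.domain := ⟨p.1.fst, p.2.1⟩
    let v : T.domain := ⟨p.1.snd, p.2.2⟩
    have happ : blkL2 S T p = WithLp.toLp 2 (-T v, S u) := rfl
    have hTv : ⟪T v, w.fst⟫_𝕜 = -⟪(p : WithLp 2 (E × F)).snd, z.snd⟫_𝕜 := by
      rw [hw_fst v, inner_neg_right]
    have hSu : ⟪S u, w.snd⟫_𝕜 = ⟪(p : WithLp 2 (E × F)).fst, z.fst⟫_𝕜 := hw_snd u
    rw [happ, WithLp.prod_inner_apply, WithLp.prod_inner_apply]
    simp only [inner_neg_left, WithLp.ofLp_fst, WithLp.ofLp_snd]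
    rw [hTv, hSu, neg_neg, add_comm]

end Block

theorem descendant_blk_skew_selfAdjoint_general {𝕜 H Y X : Type*} [RCLike 𝕜]
    [NormedAddCommGroup H] [InnerProductSpace 𝕜 H] [CompleteSpace H]
    [NormedAddCommGroup Y] [InnerProductSpace 𝕜 Y] [CompleteSpace Y]
    [NormedAddCommGroup X] [InnerProductSpace 𝕜 X] [CompleteSpace X]
    (C : H →ₗ.[𝕜] Y) (hCdense : Dense (C.domain : Set H))
    (B : Y →L[𝕜] X)
    (hdense : Dense ((pmapCompClm C.adjoint (ContinuousLinearMap.adjoint B)).domain : Set X)) :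
    (blkL2 (clmCompPMap B C).closure
        (pmapCompClm C.adjoint (ContinuousLinearMap.adjoint B))).adjoint
      = -(blkL2 (clmCompPMap B C).closure
            (pmapCompClm C.adjoint (ContinuousLinearMap.adjoint B))) := by
  have hBC : Dense ((clmCompPMap B C).domain : Set H) := hCdense
  have hBC_adjoint := adjoint_clmCompPMap hCdense B
  have hBC_adjoint_dense : Dense ((clmCompPMap B C)†.domain : Set X) := hBC_adjoint ▸ hdense
  have hclosure_adjoint :
      (clmCompPMap B C).closure† = pmapCompClm C† (ContinuousLinearMap.adjoint B) :=
    (adjoint_closure hBC).trans hBC_adjoint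
  have hadjoint_eq_closure :
      (pmapCompClm C† (ContinuousLinearMap.adjoint B))† = (clmCompPMap B C).closure := by
    rw [← hBC_adjoint, closure_eq_adjoint_adjoint hBC hBC_adjoint_dense]
  rw [adjoint_blkL2 (dense_closure_domain hBC) hdense, hclosure_adjoint, hadjoint_eq_closure]

/-- Let `C : D(C) ⊆ H → Y` be closed and densely defined, `B : Y → X`
bounded, and suppose `C* B*` is densely defined. Then the block operator
`[[0, -C*B*],[cl(BC), 0]]` on `H ⊕ X` with domain `D(cl(BC)) ⊕ D(C*B*)` is
skew-selfadjoint. -/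
theorem descendant_blk_skew_selfAdjoint {𝕜 H Y X : Type*} [RCLike 𝕜]
    [NormedAddCommGroup H] [InnerProductSpace 𝕜 H] [CompleteSpace H]
    [NormedAddCommGroup Y] [InnerProductSpace 𝕜 Y] [CompleteSpace Y]
    [NormedAddCommGroup X] [InnerProductSpace 𝕜 X] [CompleteSpace X]
    (C : H →ₗ.[𝕜] Y) (hCclosed : C.IsClosed) (hCdense : Dense (C.domain : Set H))
    (B : Y →L[𝕜] X)
    (hdense : Dense ((pmapCompClm C.adjoint (ContinuousLinearMap.adjoint B)).domain : Set X)) :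
    (blkL2 (clmCompPMap B C).closure
        (pmapCompClm C.adjoint (ContinuousLinearMap.adjoint B))).adjoint
      = -(blkL2 (clmCompPMap B C).closure
            (pmapCompClm C.adjoint (ContinuousLinearMap.adjoint B))) :=
  descendant_blk_skew_selfAdjoint_general C hCdense B hdense
end

section
/- Let A be a skew-selfadjoint operator on a Hilbert space H and let W : H → H be a bounded, boundedly invertible, selfadjoint operator. If W A W (with domain {x : Wx ∈ D(A)}) is densely defined, then its closure is skew-selfadjoint. In particular, for M₀ selfadjoint, bounded, and strictly positive definite, √(M₀⁻¹) A √(M₀⁻¹) is skew-selfadjoint (after closure). -/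
open LinearPMap

section

variable {𝕜 H Y X : Type*} [RCLike 𝕜]
  [NormedAddCommGroup H] [InnerProductSpace 𝕜 H]
  [NormedAddCommGroup Y] [InnerProductSpace 𝕜 Y]
  [NormedAddCommGroup X] [InnerProductSpace 𝕜 X]

theorem clmCompPMap_neg (B : Y →L[𝕜] X) (C : H →ₗ.[𝕜] Y) :
    clmCompPMap B (-C) = -clmCompPMap B C :=
  LinearPMap.ext rfl fun x hx _ => _root_.map_neg B (C ⟨x, hx⟩)

theorem pmapCompClm_neg (C' : Y →ₗ.[𝕜] H) (B' : X →L[𝕜] Y) :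
    pmapCompClm (-C') B' = -pmapCompClm C' B' :=
  LinearPMap.ext rfl fun _ _ _ => rfl

end

theorem Submodule.dense_of_dense_comap {R M N : Type*} [Semiring R]
    [AddCommMonoid M] [Module R M] [TopologicalSpace M]
    [AddCommMonoid N] [Module R N] [TopologicalSpace N]
    {p : Submodule R N} {f : M →L[R] N} (hf : Function.Surjective f)
    (hp : Dense (p.comap (f : M →ₗ[R] N) : Set M)) : Dense (p : Set N) :=
  (hf.denseRange.dense_image f.continuous hp).mono (Set.image_subset_iff.mpr fun _ hx => hx)

namespace LinearPMap

section

variable {R E F : Type*} [CommRing R] [AddCommGroup E] [AddCommGroup F] [Module R E] [Module R F]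
  [TopologicalSpace E] [TopologicalSpace F]

theorem IsClosed.neg [ContinuousNeg F] {f : E →ₗ.[R] F} (hf : f.IsClosed) : (-f).IsClosed := by
  have hgraph : ((-f).graph : Set (E × F)) =
      (Homeomorph.refl E).prodCongr (Homeomorph.neg F) '' f.graph := by
    rw [neg_graph, Submodule.map_coe]
    rfl
  rw [IsClosed, hgraph, Homeomorph.isClosed_image]
  exact hf

theorem IsClosed.closure_eq [ContinuousAdd E] [ContinuousAdd F] [TopologicalSpace R]
    [ContinuousSMul R E] [ContinuousSMul R F] {f : E →ₗ.[R] F} (hf : f.IsClosed) :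
    f.closure = f :=
  eq_of_eq_graph <| hf.isClosable.graph_closure_eq_closure_graph.symm.trans
    hf.submodule_topologicalClosure_eq

end

theorem isClosed_of_adjoint_eq_neg {𝕜 E : Type*} [RCLike 𝕜] [NormedAddCommGroup E]
    [InnerProductSpace 𝕜 E] [CompleteSpace E] {T : E →ₗ.[𝕜] E} (hT : Dense (T.domain : Set E))
    (h : T† = -T) : T.IsClosed := by
  simpa [h] using (adjoint_isClosed hT).neg

section

variable {𝕜 H : Type*} [RCLike 𝕜] [NormedAddCommGroup H] [InnerProductSpace 𝕜 H]

theorem IsFormalAdjoint.clmCompPMap_pmapCompClm {A S : H →ₗ.[𝕜] H} (h : A.IsFormalAdjoint S)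
    {W : H →L[𝕜] H} (hW : (W : H →ₗ[𝕜] H).IsSymmetric) :
    (clmCompPMap W (pmapCompClm A W)).IsFormalAdjoint (clmCompPMap W (pmapCompClm S W)) :=
  fun x y => calc
    inner 𝕜 (W (A ⟨W x, x.2⟩)) (y : H) = inner 𝕜 (A ⟨W x, x.2⟩) (W y) := hW.apply_clm _ _
    _ = inner 𝕜 (W x) (S ⟨W y, y.2⟩) := h ⟨W x, x.2⟩ ⟨W y, y.2⟩
    _ = inner 𝕜 (x : H) (W (S ⟨W y, y.2⟩)) := hW.apply_clm _ _

variable [CompleteSpace H]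

theorem adjoint_clmCompPMap_pmapCompClm_domain_le (A : H →ₗ.[𝕜] H) {W V : H →L[𝕜] H}
    (hW : IsSelfAdjoint W) (hWV : W.comp V = ContinuousLinearMap.id 𝕜 H) :
    (clmCompPMap W (pmapCompClm A W))†.domain ≤ (pmapCompClm A† W).domain := by
  intro y hy
  have hWV_apply (u : H) : W (V u) = u := congr($hWV u)
  let toDomain (u : A.domain) : (clmCompPMap W (pmapCompClm A W)).domain :=
    ⟨V u, show W (V u) ∈ A.domain from (hWV_apply u).symm ▸ u.2⟩
  have hcont : Continuous toDomain := by fun_prop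
  rw [mem_adjoint_domain_iff] at hy
  show W y ∈ A†.domain
  rw [mem_adjoint_domain_iff]
  convert hy.comp hcont using 1
  ext u
  show inner 𝕜 (W y) (A u) = inner 𝕜 y (W (A ⟨W (V u), _⟩))
  rw [hW.isSymmetric.apply_clm]
  congr
  exact Subtype.ext (hWV_apply u).symm

theorem adjoint_clmCompPMap_pmapCompClm {A : H →ₗ.[𝕜] H} {W V : H →L[𝕜] H}
    (hW : IsSelfAdjoint W) (hWV : W.comp V = ContinuousLinearMap.id 𝕜 H)
    (hdense : Dense ((clmCompPMap W (pmapCompClm A W)).domain : Set H)) :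
    (clmCompPMap W (pmapCompClm A W))† = clmCompPMap W (pmapCompClm A† W) := by
  have hW_surj : Function.Surjective W := fun x => ⟨V x, congr($hWV x)⟩
  have hA : Dense (A.domain : Set H) := Submodule.dense_of_dense_comap hW_surj hdense
  have hle := ((adjoint_isFormalAdjoint hA).symm.clmCompPMap_pmapCompClm
    hW.isSymmetric).le_adjoint hdense
  exact (eq_of_le_of_domain_eq hle
    (le_antisymm hle.1 (adjoint_clmCompPMap_pmapCompClm_domain_le A hW hWV))).symm

end

end LinearPMap

theorem WAW_closure_skew_selfAdjoint_general {𝕜 H : Type*} [RCLike 𝕜]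
    [NormedAddCommGroup H] [InnerProductSpace 𝕜 H] [CompleteSpace H]
    (A : H →ₗ.[𝕜] H) (hA : A.adjoint = -A)
    (W V : H →L[𝕜] H) (hW : IsSelfAdjoint W)
    (hWV : W.comp V = ContinuousLinearMap.id 𝕜 H)
    (hdense : Dense ((clmCompPMap W (pmapCompClm A W)).domain : Set H)) :
    (clmCompPMap W (pmapCompClm A W)).IsClosable ∧
      (clmCompPMap W (pmapCompClm A W)).closure.adjoint
        = -(clmCompPMap W (pmapCompClm A W)).closure := by
  have hadj : (clmCompPMap W (pmapCompClm A W))† = -clmCompPMap W (pmapCompClm A W) := by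
    rw [adjoint_clmCompPMap_pmapCompClm hW hWV hdense, hA, pmapCompClm_neg, clmCompPMap_neg]
  have hclosed := isClosed_of_adjoint_eq_neg hdense hadj
  exact ⟨hclosed.isClosable, by rw [hclosed.closure_eq, hadj]⟩

/-- Let `A` be skew-selfadjoint on a Hilbert space `H` and let `W` be a
bounded, boundedly invertible, selfadjoint operator on `H`. If `W A W` (with domain
`{x | W x ∈ D(A)}`) is densely defined, then its closure is skew-selfadjoint. -/
theorem WAW_closure_skew_selfAdjoint {𝕜 H : Type*} [RCLike 𝕜]
    [NormedAddCommGroup H] [InnerProductSpace 𝕜 H] [CompleteSpace H]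
    (A : H →ₗ.[𝕜] H) (hA : A.adjoint = -A)
    (W V : H →L[𝕜] H) (hW : IsSelfAdjoint W)
    (hWV : W.comp V = ContinuousLinearMap.id 𝕜 H)
    (hVW : V.comp W = ContinuousLinearMap.id 𝕜 H)
    (hdense : Dense ((clmCompPMap W (pmapCompClm A W)).domain : Set H)) :
    (clmCompPMap W (pmapCompClm A W)).IsClosable ∧
      (clmCompPMap W (pmapCompClm A W)).closure.adjoint
        = -(clmCompPMap W (pmapCompClm A W)).closure :=
  WAW_closure_skew_selfAdjoint_general A hA W V hW hWV hdense
end
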